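/- Let μ > 2 and γ > 0, ω* = 4(μ+1)/(γ²μ). With r as above, r(ω*) > (2 − μ + √(μ(μ+1))) / (2(μ+1)^{1/μ}) > 0. In particular, combined with monotonicity of r, one obtains r(ω) > 0 for all ω ∈ (4/γ², ω*]. -/

import Mathlib

/-!
Substituting `a = 2 / (γ √ω)` turns `r ω` into `rProfile μ a`. On `[a, 1]` one has
`(1 - t²)^(1/μ - 1) ≤ (1 + a)^(1/μ - 1) (1 - t)^(1/μ - 1)`, and integrating the right-hand side
bounds the integral, which carries the negative weight `(2 - μ) / (2μ)`. This gives
`rProfile μ a ≥ (1 - a²)^(1/μ - 1) ((2 - μ)(1 - a) + a) / 2`, positive once `(μ - 2)(1 - a) < a`.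
That holds for `a ≥ a* = √(μ / (μ + 1))`, i.e. for `ω ≤ ω*`, because `(μ + 1) a* = √(μ(μ + 1)) > μ`;
at `a*` the same bound exceeds the stated constant.
-/

open Real MeasureTheory intervalIntegral

lemma integral_one_sub_rpow {p : ℝ} (hp : -1 < p) (a : ℝ) :
    ∫ t in a..1, (1 - t) ^ p = (1 - a) ^ (p + 1) / (p + 1) := by
  rw [integral_comp_sub_left (fun x : ℝ ↦ x ^ p), integral_rpow (Or.inl hp), sub_self,
    zero_rpow (by linarith), sub_zero]

lemma integral_one_sub_sq_rpow_le {p a : ℝ} (hp : -1 < p) (hp0 : p ≤ 0) (ha : -1 < a)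
    (ha1 : a ≤ 1) :
    ∫ t in a..1, (1 - t ^ 2) ^ p ≤ (1 - a ^ 2) ^ p * (1 - a) / (p + 1) := by
  have hpt : ∀ t ∈ Set.Icc a 1, (1 - t ^ 2) ^ p ≤ (1 + a) ^ p * (1 - t) ^ p := by
    rintro t ⟨hat, ht1⟩
    rw [show 1 - t ^ 2 = (1 - t) * (1 + t) by ring, mul_rpow (by linarith) (by linarith),
      mul_comm]
    exact mul_le_mul_of_nonneg_right (rpow_le_rpow_of_nonpos (by linarith) (by linarith) hp0)
      (rpow_nonneg (by linarith) _)
  have hint : IntervalIntegrable (fun t : ℝ ↦ (1 + a) ^ p * (1 - t) ^ p) volume a 1 := by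
    simpa using ((intervalIntegrable_rpow' hp (a := 1 - a) (b := 1 - 1)).comp_sub_left 1
      ).const_mul ((1 + a) ^ p)
  calc ∫ t in a..1, (1 - t ^ 2) ^ p
      ≤ ∫ t in a..1, (1 + a) ^ p * (1 - t) ^ p := by
        rw [integral_of_le ha1, integral_of_le ha1]
        refine integral_mono_of_nonneg ?_ hint.1 ?_
        · refine ae_restrict_of_forall_mem measurableSet_Ioc fun t ht ↦ ?_
          exact rpow_nonneg (by nlinarith [ht.1, ht.2]) _
        · exact ae_restrict_of_forall_mem measurableSet_Ioc fun t ht ↦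
            hpt t (Set.Ioc_subset_Icc_self ht)
    _ = (1 - a ^ 2) ^ p * (1 - a) / (p + 1) := by
      rw [intervalIntegral.integral_const_mul, integral_one_sub_rpow hp,
        rpow_add' (by linarith) (by linarith), rpow_one,
        show 1 - a ^ 2 = (1 - a) * (1 + a) by ring, mul_rpow (by linarith) (by linarith)]
      ring

/-- The function `r` of the statement in the variable `a = 2 / (γ √ω)`. -/
noncomputable def rProfile (μ a : ℝ) : ℝ :=
  (2 - μ) / (2 * μ) * (∫ t in a..1, (1 - t ^ 2) ^ (1 / μ - 1)) +
    a / 2 * (1 - a ^ 2) ^ (1 / μ - 1)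

lemma rProfile_ge {μ a : ℝ} (hμ : 2 ≤ μ) (ha : -1 < a) (ha1 : a ≤ 1) :
    (1 - a ^ 2) ^ (1 / μ - 1) * ((2 - μ) * (1 - a) + a) / 2 ≤ rProfile μ a := by
  have hμ0 : 0 < μ := by linarith
  have hμ_inv : 1 / μ ≤ 1 := (div_le_one hμ0).mpr (by linarith)
  have hI := integral_one_sub_sq_rpow_le (p := 1 / μ - 1) (a := a)
    (by linarith [one_div_pos.mpr hμ0]) (by linarith) ha ha1
  have hcoef : (2 - μ) / (2 * μ) ≤ 0 := div_nonpos_of_nonpos_of_nonneg (by linarith) (by linarith)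
  calc (1 - a ^ 2) ^ (1 / μ - 1) * ((2 - μ) * (1 - a) + a) / 2
      = (2 - μ) / (2 * μ) * ((1 - a ^ 2) ^ (1 / μ - 1) * (1 - a) / (1 / μ - 1 + 1)) +
          a / 2 * (1 - a ^ 2) ^ (1 / μ - 1) := by
        field_simp
        ring
    _ ≤ rProfile μ a := by
        unfold rProfile
        gcongr ?_ + _
        exact mul_le_mul_of_nonpos_left hI hcoef

lemma rProfile_pos {μ a : ℝ} (hμ : 2 ≤ μ) (ha : -1 < a) (ha1 : a < 1)
    (h : (μ - 2) * (1 - a) < a) : 0 < rProfile μ a := by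
  refine lt_of_lt_of_le ?_ (rProfile_ge hμ ha ha1.le)
  have := rpow_pos_of_pos (show 0 < 1 - a ^ 2 by nlinarith) (1 / μ - 1)
  have : 0 < (2 - μ) * (1 - a) + a := by linarith
  positivity

lemma two_div_mul_sqrt_sq {γ ω : ℝ} (hω : 0 ≤ ω) : (2 / (γ * √ω)) ^ 2 = 4 / (γ ^ 2 * ω) := by
  rw [div_pow, mul_pow, sq_sqrt hω]
  norm_num

lemma rProfile_two_div_mul_sqrt (μ : ℝ) {γ ω : ℝ} (hγ : 0 < γ) (hω : 0 < ω) :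
    rProfile μ (2 / (γ * √ω)) =
      (2 - μ) / (2 * μ) * (∫ t in (2 / (γ * √ω))..1, (1 - t ^ 2) ^ (1 / μ - 1)) +
        (γ * √ω)⁻¹ * (1 - 4 / (γ ^ 2 * ω)) ^ (1 / μ - 1) := by
  have : 0 < γ * √ω := by positivity
  rw [rProfile, two_div_mul_sqrt_sq hω.le]
  field_simp

lemma two_div_mul_sqrt_lt_one {γ ω : ℝ} (hγ : 0 < γ) (hω : 4 / γ ^ 2 < ω) :
    2 / (γ * √ω) < 1 := by
  have hω0 : 0 < ω := lt_trans (by positivity) hω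
  rw [← abs_of_pos (show 0 < 2 / (γ * √ω) by positivity), ← sq_lt_one_iff_abs_lt_one,
    two_div_mul_sqrt_sq hω0.le, div_lt_one (by positivity)]
  rwa [div_lt_iff₀ (by positivity), mul_comm] at hω

lemma sqrt_mul_add_one_eq {μ : ℝ} (hμ : 0 ≤ μ) :
    √(μ * (μ + 1)) = (μ + 1) * √(μ / (μ + 1)) := by
  rw [show μ * (μ + 1) = (μ + 1) ^ 2 * (μ / (μ + 1)) by field_simp, sqrt_mul (by positivity),
    sqrt_sq (by linarith)]

lemma lt_sqrt_mul_add_one {μ : ℝ} (hμ : 0 < μ) : μ < √(μ * (μ + 1)) :=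
  (lt_sqrt hμ.le).mpr (by nlinarith)

lemma one_div_add_one_rpow {μ : ℝ} (hμ : 0 < μ) :
    (1 / (μ + 1)) ^ (1 / μ - 1) = (μ + 1) / (μ + 1) ^ (1 / μ) := by
  rw [one_div, inv_rpow (by linarith), rpow_sub (by linarith), rpow_one, inv_div]

/-- At `a = √(μ / (μ + 1))` the bound `rProfile_ge` exceeds the claimed constant by
`(μ - 2) (√(μ (μ + 1)) - μ) / (2 (μ + 1) ^ (1 / μ))`. -/
lemma rProfile_sqrt_div_gt {μ : ℝ} (hμ : 2 < μ) :
    (2 - μ + √(μ * (μ + 1))) / (2 * (μ + 1) ^ (1 / μ)) < rProfile μ √(μ / (μ + 1)) := by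
  have hμ0 : 0 < μ := by linarith
  set a := √(μ / (μ + 1)) with ha
  have ha0 : 0 ≤ a := sqrt_nonneg _
  have ha_sq : 1 - a ^ 2 = 1 / (μ + 1) := by
    rw [ha, sq_sqrt (by positivity)]
    field_simp
    ring
  have hs := lt_sqrt_mul_add_one hμ0
  rw [sqrt_mul_add_one_eq hμ0.le, ← ha] at hs ⊢
  have ha1 : a ≤ 1 := by nlinarith [one_div_pos.mpr (show 0 < μ + 1 by linarith)]
  refine lt_of_lt_of_le ?_ (rProfile_ge hμ.le (by linarith) ha1)
  rw [ha_sq, one_div_add_one_rpow hμ0]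
  rw [div_lt_div_iff₀ (by positivity) (by positivity)]
  field_simp
  nlinarith [mul_pos (sub_pos.mpr hμ) (sub_pos.mpr hs)]

theorem stmt19 (μ γ : ℝ) (hμ : 2 < μ) (hγ : 0 < γ)
    (r : ℝ → ℝ)
    (hr : ∀ ω : ℝ, r ω =
      ((2-μ)/(2*μ)) * (∫ t in (2/(γ*Real.sqrt ω))..1, (1-t^2) ^ (1/μ-1)) +
        (γ*Real.sqrt ω)⁻¹ * (1 - 4/(γ^2*ω)) ^ (1/μ-1)) :
    (2 - μ + Real.sqrt (μ*(μ+1))) / (2*(μ+1) ^ (1/μ)) < r (4*(μ+1)/(γ^2*μ)) ∧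
    0 < (2 - μ + Real.sqrt (μ*(μ+1))) / (2*(μ+1) ^ (1/μ)) ∧
    ∀ ω : ℝ, 4/γ^2 < ω → ω ≤ 4*(μ+1)/(γ^2*μ) → 0 < r ω := by
  have hμ0 : 0 < μ := by linarith
  have hr' : ∀ ω, 0 < ω → r ω = rProfile μ (2 / (γ * √ω)) := fun ω hω ↦ by
    rw [hr, rProfile_two_div_mul_sqrt μ hγ hω]
  have hω_star : 0 < 4 * (μ + 1) / (γ ^ 2 * μ) := by positivity
  have ha_star : 2 / (γ * √(4 * (μ + 1) / (γ ^ 2 * μ))) = √(μ / (μ + 1)) := by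
    rw [← sqrt_sq (show 0 ≤ 2 / (γ * √(4 * (μ + 1) / (γ ^ 2 * μ))) by positivity),
      two_div_mul_sqrt_sq hω_star.le]
    congr 1
    field_simp
  have hs := lt_sqrt_mul_add_one hμ0
  refine ⟨?_, div_pos (by linarith) (by positivity), fun ω hω hω_le ↦ ?_⟩
  · rw [hr' _ hω_star, ha_star]
    exact rProfile_sqrt_div_gt hμ
  · have hω0 : 0 < ω := lt_trans (by positivity) hω
    have ha : √(μ / (μ + 1)) ≤ 2 / (γ * √ω) := by
      rw [← ha_star]
      gcongr
    have ha1 := two_div_mul_sqrt_lt_one hγ hω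
    rw [sqrt_mul_add_one_eq hμ0.le] at hs
    rw [hr' ω hω0]
    exact rProfile_pos hμ.le (by linarith [sqrt_nonneg (μ / (μ + 1))]) ha1 (by nlinarith)
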